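/- Let ψ be the characteristic exponent of a Lévy process with generator L_ψ. If the zero set {ψ = 0} contains a nonzero element h, then L_ψ fails the Liouville property: there exists a nonconstant bounded function f (e.g. f(x) = e^{-ih·x}, or its real part) with L_ψ f = 0 in the sense of distributions. -/

import Mathlib

open MeasureTheory SchwartzMap
open scoped ComplexOrder BigOperators
noncomputable section

/-- A continuous negative definite function. -/
def IsCNDF {d : ℕ} (ψ : EuclideanSpace ℝ (Fin d) → ℂ) : Prop :=
  Continuous ψ ∧ ψ 0 = 0 ∧
    ∀ t : ℝ, 0 ≤ t → ∀ (m : ℕ) (ξ : Fin m → EuclideanSpace ℝ (Fin d)) (c : Fin m → ℂ),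
      0 ≤ ∑ j, ∑ k, c j * (starRingEnd ℂ) (c k) * Complex.exp (-(t : ℂ) * ψ (ξ j - ξ k))

/-- The adjoint Lévy operator `L_{ψ̄} φ`, i.e. the pseudo-differential operator with
symbol `-ψ̄` applied to a test function `φ`:
`L_{ψ̄} φ (x) = ∫ e^{i x·ξ} (-ψ̄(ξ)) (2π)^{-d} (∫ e^{-i y·ξ} φ(y) dy) dξ`. -/
def adjLevyOp {d : ℕ} (ψ : EuclideanSpace ℝ (Fin d) → ℂ)
    (φ : SchwartzMap (EuclideanSpace ℝ (Fin d)) ℂ)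
    (x : EuclideanSpace ℝ (Fin d)) : ℂ :=
  ∫ ξ, Complex.exp (Complex.I * ((inner ℝ x ξ : ℝ) : ℂ)) * (-(starRingEnd ℂ) (ψ ξ)) *
    ((((2 * Real.pi) ^ d : ℝ) : ℂ)⁻¹ *
      ∫ y, Complex.exp (-(Complex.I * ((inner ℝ y ξ : ℝ) : ℂ))) * φ y)

/-! The plane wave `f x = exp (-i⟪h, x⟫)` is bounded and, for `h ≠ 0`, nonconstant. Rescaling
frequencies by `2π` writes `L_{ψ̄} φ` as `𝓕⁻ G` for the Fourier multiplier
`G u = -conj (ψ (2π u)) · 𝓕 φ u`, and then `∫ f · L_{ψ̄} φ = 𝓕 (𝓕⁻ G) (h / 2π)`. Since `G` is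
continuous and `G (h / 2π) = 0`, Fourier inversion at that point makes the pairing vanish. -/

open Complex Real ComplexConjugate
open scoped FourierTransform RealInnerProductSpace

section
variable {V E : Type*} [NormedAddCommGroup V] [InnerProductSpace ℝ V] [MeasurableSpace V]
  [BorelSpace V] [FiniteDimensional ℝ V] [NormedAddCommGroup E] [NormedSpace ℂ E]

theorem integral_cexp_neg_I_inner_smul_eq_fourier (F : V → E) (w : V) :
    ∫ v, cexp (-(I * ⟪v, w⟫)) • F v = 𝓕 F ((2 * π)⁻¹ • w) := by
  rw [Real.fourier_eq']
  congr with v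
  rw [real_inner_smul_right]
  congr 1
  push_cast
  field_simp

theorem inv_two_pi_pow_smul_integral_cexp_I_inner_smul_eq_fourierInv (F : V → E) (x : V) :
    ((2 * π) ^ Module.finrank ℝ V)⁻¹ • ∫ ξ, cexp (I * ⟪x, ξ⟫) • F ξ
      = 𝓕⁻ (fun u ↦ F ((2 * π) • u)) x := by
  rw [Real.fourierInv_eq', ← abs_of_pos (by positivity : 0 < ((2 * π) ^ Module.finrank ℝ V)⁻¹),
    ← Measure.integral_comp_smul]
  congr with u
  rw [real_inner_smul_right, real_inner_comm]
  congr 2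
  push_cast
  ring

theorem fourierInv_eq_zero_of_not_integrable {G : V → E} (hG : ¬Integrable G) : 𝓕⁻ G = 0 := by
  ext v
  rw [Real.fourierInv_eq_fourier_neg, Real.fourier_eq]
  exact integral_undef (by rwa [Real.fourierIntegral_convergent_iff])

/-- No integrability is assumed: when `G` or `𝓕⁻ G` is not integrable, the outer Fourier integral
diverges and is `0` by convention. -/
theorem fourier_fourierInv_apply_eq_zero [CompleteSpace E] {G : V → E} {w : V}
    (hG : ContinuousAt G w) (hGw : G w = 0) : 𝓕 (𝓕⁻ G) w = 0 := by
  by_cases hGi : Integrable G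
  swap
  · rw [fourierInv_eq_zero_of_not_integrable hGi, Real.fourier_eq]
    simp
  by_cases hFi : Integrable (𝓕⁻ G)
  · have hFG : Integrable (𝓕 G) := by
      simpa [Real.fourierInv_eq_fourier_neg] using hFi.comp_neg
    rw [hGi.fourier_fourierInv_eq hFG hG, hGw]
  · rw [Real.fourier_eq]
    exact integral_undef (by rwa [Real.fourierIntegral_convergent_iff])

end

theorem exists_cexp_neg_I_inner_ne {V : Type*} [NormedAddCommGroup V] [InnerProductSpace ℝ V]
    {h : V} (hh : h ≠ 0) : ∃ x y : V, cexp (-(I * ⟪h, x⟫)) ≠ cexp (-(I * ⟪h, y⟫)) := by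
  have hπ : ⟪h, (π / ‖h‖ ^ 2) • h⟫ = π := by
    rw [real_inner_smul_right, real_inner_self_eq_norm_sq]
    field_simp [norm_ne_zero_iff.2 hh]
  refine ⟨(π / ‖h‖ ^ 2) • h, 0, ?_⟩
  rw [hπ, inner_zero_right]
  simp [mul_comm I, Complex.exp_neg, Complex.exp_pi_mul_I]
  norm_num

theorem adjLevyOp_eq_fourierInv {d : ℕ} (ψ : EuclideanSpace ℝ (Fin d) → ℂ)
    (φ : 𝓢(EuclideanSpace ℝ (Fin d), ℂ)) (x : EuclideanSpace ℝ (Fin d)) :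
    adjLevyOp ψ φ x = 𝓕⁻ (fun u ↦ -conj (ψ ((2 * π) • u)) * 𝓕 ⇑φ u) x := by
  have hG : (fun u ↦ -conj (ψ ((2 * π) • u)) * 𝓕 ⇑φ u)
      = fun u ↦ (fun ξ ↦ -conj (ψ ξ) * 𝓕 ⇑φ ((2 * π)⁻¹ • ξ)) ((2 * π) • u) := by
    simp only [inv_smul_smul₀ two_pi_pos.ne']
  rw [hG, ← inv_two_pi_pow_smul_integral_cexp_I_inner_smul_eq_fourierInv
    (fun ξ ↦ -conj (ψ ξ) * 𝓕 ⇑φ ((2 * π)⁻¹ • ξ)), finrank_euclideanSpace_fin, adjLevyOp,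
    ← integral_smul]
  congr with ξ
  simp only [← smul_eq_mul (a := cexp _), integral_cexp_neg_I_inner_smul_eq_fourier,
    Complex.real_smul]
  push_cast
  ring

/-- If the symbol has a nontrivial zero, the Liouville property fails: there is a
nonconstant bounded solution of `L_ψ f = 0`. -/
theorem not_liouville_of_nontrivial_zero {d : ℕ}
    (ψ : EuclideanSpace ℝ (Fin d) → ℂ) (hψ : IsCNDF ψ)
    (h : EuclideanSpace ℝ (Fin d)) (hh : h ≠ 0) (hψh : ψ h = 0) :
    ∃ f : EuclideanSpace ℝ (Fin d) → ℂ, Continuous f ∧ (∀ x, ‖f x‖ ≤ 1) ∧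
      (∃ x y, f x ≠ f y) ∧
      ∀ φ : SchwartzMap (EuclideanSpace ℝ (Fin d)) ℂ, HasCompactSupport ⇑φ →
        ∫ x, f x * adjLevyOp ψ φ x = 0 := by
  obtain ⟨hψc, -⟩ := hψ
  refine ⟨fun x ↦ cexp (-(I * ⟪h, x⟫)), by fun_prop, fun x ↦ by simp [Complex.norm_exp],
    exists_cexp_neg_I_inner_ne hh, fun φ _ ↦ ?_⟩
  have hFφ : Continuous (𝓕 ⇑φ) := (𝓕 φ).continuous
  have hG : Continuous fun u ↦ -conj (ψ ((2 * π) • u)) * 𝓕 ⇑φ u := by fun_prop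
  simp_rw [adjLevyOp_eq_fourierInv, ← smul_eq_mul (a := cexp _), real_inner_comm _ h,
    integral_cexp_neg_I_inner_smul_eq_fourier]
  exact fourier_fourierInv_apply_eq_zero hG.continuousAt
    (by rw [smul_inv_smul₀ two_pi_pos.ne', hψh]; simp)
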